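/- arXiv:1610.05979 — 2 statements merged into one kernel-verified Lean document; each statement's English description precedes it below -/
import Mathlib

section
/- Let d ≥ 1, let G_1,…,G_d and H_1,…,H_d be finite simple connected graphs with totally ordered vertex sets, and for each i let f_i : H_i → G_i be a graph homomorphism (for every edge {u,v} of H_i, either f_i(u) = f_i(v) or {f_i(u),f_i(v)} is an edge of G_i) that is monotone with respect to the total orders. Let f : ℋ_0 → 𝒢_0 be the product map, and let f* : Z(𝒢) → Z(ℋ) be the graded ring homomorphism defined on generators by f*(C_v) = Σ_{u ∈ ℋ_0, f(u) = v} C_u. Then f* maps I_rat(𝒢) into I_rat(ℋ), and hence induces a graded ring homomorphism f* : Chow(𝒢) → Chow(ℋ). -/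
open MvPolynomial

namespace ChowGS

variable {d : ℕ}

section General

variable (V : Fin d → Type) [∀ i, Fintype (V i)] [∀ i, LinearOrder (V i)]
variable (G : ∀ i, SimpleGraph (V i))

/-- The vertex set of the product `𝒢 = G_1 × … × G_d`. -/
abbrev GV : Type := ∀ i, V i

/-- `u ≤ v` is a 1-simplex of the product. -/
def OneSimplex (u v : GV V) : Prop :=
  u ≤ v ∧ ∀ i, u i = v i ∨ (G i).Adj (u i) (v i)

/-- `I(u,v)`: the set of coordinates where `u` is strictly smaller than `v`. -/
def Iset (u v : GV V) : Finset (Fin d) :=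
  Finset.univ.filter fun i => u i < v i

/-- A (possibly degenerate) `k`-simplex of the product. -/
def IsSimplexChain {k : ℕ} (σ : Fin (k + 1) → GV V) : Prop :=
  Monotone σ ∧
  (∀ j : Fin k, OneSimplex V G (σ j.castSucc) (σ j.succ)) ∧
  ∀ j j' : Fin k, j ≠ j' →
    Disjoint (Iset V (σ j.castSucc) (σ j.succ)) (Iset V (σ j'.castSucc) (σ j'.succ))

/-- A list of vertices forms a simplex of `𝒢`. -/
def FormsSimplex (l : List (GV V)) : Prop :=
  ∃ (k : ℕ) (σ : Fin (k + 1) → GV V), IsSimplexChain V G σ ∧ l.Subperm (List.ofFn σ)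

/-- The ideal of elements rationally equivalent to zero, generated by (R1), (R2), (R3). -/
noncomputable def Irat : Ideal (MvPolynomial (GV V) ℤ) :=
  Ideal.span
    ({ p | ∃ l : List (GV V), ¬ FormsSimplex V G l ∧ p = (l.map X).prod } ∪
     { p | ∃ u : GV V, p = X u * ∑ v : GV V, X v } ∪
     { p | ∃ u w : GV V, ∃ i : Fin d, u i ≠ w i ∧
         p = X u * X w * ∑ v ∈ Finset.univ.filter (fun v : GV V => v i = u i), X v })

/-- The combinatorial Chow ring of the product of graphs. -/
abbrev Chow : Type := MvPolynomial (GV V) ℤ ⧸ Irat V G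

noncomputable def mkChow : MvPolynomial (GV V) ℤ →ₐ[ℤ] Chow V G :=
  Ideal.Quotient.mkₐ ℤ (Irat V G)

/-- The degree `n` graded piece of the Chow ring. -/
noncomputable def chowPiece (n : ℕ) : Submodule ℤ (Chow V G) :=
  Submodule.map (mkChow V G).toLinearMap (homogeneousSubmodule (GV V) ℤ n)

end General
end ChowGS
set_option linter.unusedSectionVars false
namespace ChowGS

variable {d : ℕ}

private lemma exists_change_nat {α : Type*} (g : ℕ → α) :
    ∀ b a, a ≤ b → g a ≠ g b → ∃ m, a ≤ m ∧ m < b ∧ g m ≠ g (m + 1) := by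
  intro b
  induction b with
  | zero =>
    intro a ha hne
    have h0 : a = 0 := Nat.le_zero.mp ha
    exact absurd (h0 ▸ rfl) hne
  | succ b ih =>
    intro a ha hne
    have ha' : a ≤ b := by
      rcases Nat.lt_succ_iff_lt_or_eq.mp (Nat.lt_succ_of_le ha) with h | h
      · omega
      · exact absurd (h ▸ rfl) hne
    by_cases hb : g b = g (b + 1)
    · obtain ⟨m, h1, h2, h3⟩ := ih a ha' (fun e => hne (e.trans hb))
      exact ⟨m, h1, by omega, h3⟩
    · exact ⟨b, ha', by omega, hb⟩

section General

variable (V : Fin d → Type) [∀ i, Fintype (V i)] [∀ i, LinearOrder (V i)]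
variable (G : ∀ i, SimpleGraph (V i))

private lemma chain_exists_change {k : ℕ} (σ : Fin (k + 1) → GV V) (i : Fin d)
    {j j' : Fin (k + 1)} (hjj : (j : ℕ) ≤ (j' : ℕ)) (hne : σ j i ≠ σ j' i) :
    ∃ m : Fin k, (j : ℕ) ≤ (m : ℕ) ∧ (m : ℕ) < (j' : ℕ) ∧
      σ m.castSucc i ≠ σ m.succ i := by
  set g : ℕ → V i := fun n => σ ⟨min n k, by omega⟩ i with hg
  have hgj : ∀ j0 : Fin (k + 1), g (j0 : ℕ) = σ j0 i := by
    intro j0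
    have : (⟨min (j0 : ℕ) k, by omega⟩ : Fin (k + 1)) = j0 := by
      ext; simp [Nat.min_eq_left (Nat.lt_succ_iff.mp j0.isLt)]
    simp [hg, this]
  obtain ⟨m, h1, h2, h3⟩ := exists_change_nat g (j' : ℕ) (j : ℕ) hjj
    (by rw [hgj, hgj]; exact hne)
  have hm : m < k := lt_of_lt_of_le h2 (Nat.lt_succ_iff.mp j'.isLt)
  refine ⟨⟨m, hm⟩, h1, h2, ?_⟩
  have e1 : (⟨min m k, by omega⟩ : Fin (k + 1)) = (⟨m, hm⟩ : Fin k).castSucc := by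
    ext; simp [Nat.min_eq_left hm.le]
  have e2 : (⟨min (m + 1) k, by omega⟩ : Fin (k + 1)) = (⟨m, hm⟩ : Fin k).succ := by
    ext; simp [Nat.min_eq_left hm]
  have h3' : σ (⟨min m k, by omega⟩ : Fin (k + 1)) i ≠
      σ (⟨min (m + 1) k, by omega⟩ : Fin (k + 1)) i := h3
  rwa [e1, e2] at h3'

private lemma chain_two_values {k : ℕ} {σ : Fin (k + 1) → GV V}
    (h : IsSimplexChain V G σ) (i : Fin d) (j : Fin (k + 1)) :
    σ j i = σ 0 i ∨ σ j i = σ (Fin.last k) i := by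
  by_contra hc
  push_neg at hc
  obtain ⟨m1, _, hm1lt, hne1⟩ :=
    chain_exists_change V σ i (j := 0) (j' := j) (Nat.zero_le _) (Ne.symm hc.1)
  obtain ⟨m2, hm2ge, _, hne2⟩ :=
    chain_exists_change V σ i (j := j) (j' := Fin.last k)
      (Nat.lt_succ_iff.mp j.isLt) hc.2
  have hmm : m1 ≠ m2 := by
    intro e
    rw [e] at hm1lt
    omega
  have key : ∀ m : Fin k, σ m.castSucc i ≠ σ m.succ i →
      i ∈ Iset V (σ m.castSucc) (σ m.succ) := by
    intro m hne
    have hle : σ m.castSucc ≤ σ m.succ := h.1 (le_of_lt (Fin.castSucc_lt_succ (i := m)))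
    exact Finset.mem_filter.mpr ⟨Finset.mem_univ _, lt_of_le_of_ne (hle i) hne⟩
  exact Finset.disjoint_left.mp (h.2.2 m1 m2 hmm) (key m1 hne1) (key m2 hne2)

private lemma not_formsSimplex_of_three {a c b : GV V} {i : Fin d}
    (h1 : a i ≠ c i) (h2 : a i ≠ b i) (h3 : c i ≠ b i) :
    ¬ FormsSimplex V G [a, c, b] := by
  rintro ⟨k, σ, hσ, hsub⟩
  have hmem : ∀ x ∈ [a, c, b], ∃ j, σ j = x := by
    intro x hx
    have := hsub.subset hx
    rwa [List.mem_ofFn] at this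
  obtain ⟨ja, hja⟩ := hmem a (by simp)
  obtain ⟨jc, hjc⟩ := hmem c (by simp)
  obtain ⟨jb, hjb⟩ := hmem b (by simp)
  have Oa := chain_two_values V G hσ i ja
  have Oc := chain_two_values V G hσ i jc
  have Ob := chain_two_values V G hσ i jb
  rw [hja] at Oa; rw [hjc] at Oc; rw [hjb] at Ob
  rcases Oa with oa | oa <;> rcases Oc with oc | oc <;> rcases Ob with ob | ob <;>
    first
      | exact h1 (oa.trans oc.symm)
      | exact h2 (oa.trans ob.symm)
      | exact h3 (oc.trans ob.symm)

private lemma r1_mem {l : List (GV V)} (h : ¬ FormsSimplex V G l) :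
    (l.map X).prod ∈ Irat V G :=
  Ideal.subset_span (Or.inl (Or.inl ⟨l, h, rfl⟩))

private lemma r2_mem (u : GV V) :
    (X u * ∑ v : GV V, X v : MvPolynomial (GV V) ℤ) ∈ Irat V G :=
  Ideal.subset_span (Or.inl (Or.inr ⟨u, rfl⟩))

private lemma r3_mem (u w : GV V) (i : Fin d) (h : u i ≠ w i) :
    (X u * X w * ∑ v ∈ Finset.univ.filter (fun v : GV V => v i = u i), X v :
      MvPolynomial (GV V) ℤ) ∈ Irat V G :=
  Ideal.subset_span (Or.inr ⟨u, w, i, h, rfl⟩)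

end General

private lemma mul_mem_span_image {R : Type*} [CommRing R] {S : Set R} {x : R}
    (hx : x ∈ Ideal.span S) (c : R) :
    c * x ∈ Ideal.span ((fun s => c * s) '' S) := by
  refine Submodule.span_induction
    (fun s hs => Ideal.subset_span ⟨s, hs, rfl⟩)
    (by simp)
    (fun y z _ _ hy hz => by rw [mul_add]; exact Ideal.add_mem _ hy hz)
    (fun r y _ hy => by
      rw [smul_eq_mul, ← mul_assoc, mul_comm c r, mul_assoc]
      exact Ideal.mul_mem_left _ r hy)
    hx

section Func

variable (A : Fin d → Type) [∀ i, Fintype (A i)] [∀ i, LinearOrder (A i)]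
variable (B : Fin d → Type) [∀ i, Fintype (B i)] [∀ i, LinearOrder (B i)]
variable (H : ∀ i, SimpleGraph (A i)) (G : ∀ i, SimpleGraph (B i))
variable (f : ∀ i, A i → B i)

private lemma formsSimplex_map
    (hhom : ∀ i, ∀ u v : A i, (H i).Adj u v →
      f i u = f i v ∨ (G i).Adj (f i u) (f i v))
    (hmono : ∀ i, Monotone (f i))
    {l : List (GV A)} (hl : FormsSimplex A H l) :
    FormsSimplex B G (l.map (fun u i => f i (u i))) := by
  obtain ⟨k, σ, ⟨hmon, hone, hdisj⟩, hsub⟩ := hl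
  refine ⟨k, fun j i => f i (σ j i), ⟨?_, ?_, ?_⟩, ?_⟩
  · intro x y hxy i
    exact hmono i (hmon hxy i)
  · intro j
    obtain ⟨hle, hadj⟩ := hone j
    refine ⟨fun i => hmono i (hle i), fun i => ?_⟩
    rcases hadj i with e | ha
    · exact Or.inl (congrArg (f i) e)
    · exact hhom i _ _ ha
  · intro j j' hne
    have hsubI : ∀ m : Fin k,
        Iset B (fun i => f i (σ m.castSucc i)) (fun i => f i (σ m.succ i)) ⊆
          Iset A (σ m.castSucc) (σ m.succ) := by
      intro m i hi
      rw [Iset, Finset.mem_filter] at hi ⊢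
      refine ⟨Finset.mem_univ _, lt_of_le_of_ne ((hone m).1 i) fun e => ?_⟩
      exact absurd (congrArg (f i) e) (ne_of_lt hi.2)
    exact Finset.disjoint_of_subset_left (hsubI j)
      (Finset.disjoint_of_subset_right (hsubI j') (hdisj j j' hne))
  · obtain ⟨l0, hperm, hsl⟩ := hsub
    refine ⟨l0.map (fun u i => f i (u i)), hperm.map _, ?_⟩
    have := hsl.map (fun u i => f i (u i))
    rwa [List.map_ofFn] at this

private lemma aeval_listProd (l : List (GV B)) :
    (aeval (fun v : GV B =>
        ∑ u ∈ Finset.univ.filter (fun u : GV A => (fun i => f i (u i)) = v),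
          (X u : MvPolynomial (GV A) ℤ))
      ((l.map (X : GV B → MvPolynomial (GV B) ℤ)).prod)) ∈
      Ideal.span {q | ∃ l' : List (GV A),
        l'.map (fun u i => f i (u i)) = l ∧ q = (l'.map X).prod} := by
  induction l with
  | nil =>
    simp only [List.map_nil, List.prod_nil, map_one]
    exact Ideal.subset_span ⟨[], rfl, rfl⟩
  | cons v t ih =>
    have hstep : (aeval (fun v : GV B =>
        ∑ u ∈ Finset.univ.filter (fun u : GV A => (fun i => f i (u i)) = v),
          (X u : MvPolynomial (GV A) ℤ))
        (((v :: t).map (X : GV B → MvPolynomial (GV B) ℤ)).prod)) =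
        ∑ u ∈ Finset.univ.filter (fun u : GV A => (fun i => f i (u i)) = v),
          X u * (aeval (fun v : GV B =>
            ∑ u ∈ Finset.univ.filter (fun u : GV A => (fun i => f i (u i)) = v),
              (X u : MvPolynomial (GV A) ℤ))
            ((t.map (X : GV B → MvPolynomial (GV B) ℤ)).prod)) := by
      rw [List.map_cons, List.prod_cons, map_mul, aeval_X, Finset.sum_mul]
    rw [hstep]
    refine Ideal.sum_mem _ fun u hu => ?_
    have hFu : (fun i => f i (u i)) = v := (Finset.mem_filter.mp hu).2
    refine Ideal.span_le.mpr ?_ (mul_mem_span_image ih (X u))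
    rintro q ⟨q0, ⟨t', ht', rfl⟩, rfl⟩
    exact Ideal.subset_span ⟨u :: t', by simp [ht', hFu], by simp⟩

end Func
end ChowGS
/-- **Functoriality** (Proposition 2.4): monotone graph homomorphisms `f_i : H_i → G_i`
induce a map `f* : Z(𝒢) → Z(ℋ)`, `C_v ↦ Σ_{f(u) = v} C_u`, which sends `I_rat(𝒢)` into
`I_rat(ℋ)` and hence induces a graded ring homomorphism `f* : Chow(𝒢) → Chow(ℋ)`. -/
theorem ChowGS.functoriality
    {d : ℕ} (hd : 1 ≤ d)
    (A : Fin d → Type) [∀ i, Fintype (A i)] [∀ i, LinearOrder (A i)]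
    (B : Fin d → Type) [∀ i, Fintype (B i)] [∀ i, LinearOrder (B i)]
    (H : ∀ i, SimpleGraph (A i)) (G : ∀ i, SimpleGraph (B i))
    (hconnH : ∀ i, (H i).Connected) (hconnG : ∀ i, (G i).Connected)
    (f : ∀ i, A i → B i)
    (hhom : ∀ i, ∀ u v : A i, (H i).Adj u v →
      f i u = f i v ∨ (G i).Adj (f i u) (f i v))
    (hmono : ∀ i, Monotone (f i)) :
    (∀ p ∈ ChowGS.Irat B G,
        MvPolynomial.aeval
          (fun v : ChowGS.GV B =>
            ∑ u ∈ Finset.univ.filter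
                (fun u : ChowGS.GV A => (fun i => f i (u i)) = v),
              MvPolynomial.X u)
          p ∈ ChowGS.Irat A H) ∧
    ∃ g : ChowGS.Chow B G →+* ChowGS.Chow A H,
      ∀ p : MvPolynomial (ChowGS.GV B) ℤ,
        g (ChowGS.mkChow B G p) =
          ChowGS.mkChow A H
            (MvPolynomial.aeval
              (fun v : ChowGS.GV B =>
                ∑ u ∈ Finset.univ.filter
                    (fun u : ChowGS.GV A => (fun i => f i (u i)) = v),
                  MvPolynomial.X u)
              p) := by
  have key : ∀ p ∈ ChowGS.Irat B G,
      MvPolynomial.aeval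
        (fun v : ChowGS.GV B =>
          ∑ u ∈ Finset.univ.filter
              (fun u : ChowGS.GV A => (fun i => f i (u i)) = v),
            MvPolynomial.X u) p ∈ ChowGS.Irat A H := by
    have hle : Ideal.map
        (MvPolynomial.aeval
          (fun v : ChowGS.GV B =>
            ∑ u ∈ Finset.univ.filter
                (fun u : ChowGS.GV A => (fun i => f i (u i)) = v),
              (MvPolynomial.X u : MvPolynomial (ChowGS.GV A) ℤ)) :
          MvPolynomial (ChowGS.GV B) ℤ →ₐ[ℤ] MvPolynomial (ChowGS.GV A) ℤ)
        (ChowGS.Irat B G) ≤ ChowGS.Irat A H := by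
      unfold ChowGS.Irat
      rw [Ideal.map_span, Ideal.span_le]
      rintro q ⟨p, hp, rfl⟩
      rcases hp with (⟨l, hl, rfl⟩ | ⟨u, rfl⟩) | ⟨u, w, i, hiuw, rfl⟩
      · -- (R1)
        refine Ideal.span_le.mpr ?_ (ChowGS.aeval_listProd A B f l)
        rintro q ⟨l', hl', rfl⟩
        exact ChowGS.r1_mem A H
          (fun hs => hl (hl' ▸ ChowGS.formsSimplex_map A B H G f hhom hmono hs))
      · -- (R2)
        have hcalc : (MvPolynomial.aeval
            (fun v : ChowGS.GV B =>
              ∑ u ∈ Finset.univ.filter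
                  (fun u : ChowGS.GV A => (fun i => f i (u i)) = v),
                (MvPolynomial.X u : MvPolynomial (ChowGS.GV A) ℤ)))
            ((MvPolynomial.X u : MvPolynomial (ChowGS.GV B) ℤ) *
              ∑ v : ChowGS.GV B, MvPolynomial.X v) =
            ∑ a ∈ Finset.univ.filter
                (fun a : ChowGS.GV A => (fun i => f i (a i)) = u),
              (MvPolynomial.X a * ∑ b : ChowGS.GV A, MvPolynomial.X b) := by
          rw [map_mul, map_sum]
          simp only [MvPolynomial.aeval_X]
          rw [Finset.sum_fiberwise Finset.univ
            (fun b : ChowGS.GV A => (fun i => f i (b i))) MvPolynomial.X,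
            Finset.sum_mul]
        rw [hcalc]
        exact Ideal.sum_mem _ fun a _ => ChowGS.r2_mem A H a
      · -- (R3)
        set Sb : A i → MvPolynomial (ChowGS.GV A) ℤ :=
          fun t0 => ∑ b ∈ Finset.univ.filter (fun b : ChowGS.GV A => b i = t0),
            MvPolynomial.X b with hSb
        have hstepA : (MvPolynomial.aeval
            (fun v : ChowGS.GV B =>
              ∑ u ∈ Finset.univ.filter
                  (fun u : ChowGS.GV A => (fun i => f i (u i)) = v),
                (MvPolynomial.X u : MvPolynomial (ChowGS.GV A) ℤ)))
            (∑ v ∈ Finset.univ.filter (fun v : ChowGS.GV B => v i = u i),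
              (MvPolynomial.X v : MvPolynomial (ChowGS.GV B) ℤ)) =
            ∑ b ∈ Finset.univ.filter
                (fun b : ChowGS.GV A => f i (b i) = u i),
              (MvPolynomial.X b : MvPolynomial (ChowGS.GV A) ℤ) := by
          rw [map_sum]
          simp only [MvPolynomial.aeval_X]
          rw [← Finset.sum_fiberwise_of_maps_to
            (t := Finset.univ.filter (fun v : ChowGS.GV B => v i = u i))
            (g := fun b : ChowGS.GV A => (fun i' => f i' (b i')))
            (fun b hb => Finset.mem_filter.mpr
              ⟨Finset.mem_univ _, (Finset.mem_filter.mp hb).2⟩)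
            MvPolynomial.X]
          refine Finset.sum_congr rfl fun v hv => ?_
          have hvi : v i = u i := (Finset.mem_filter.mp hv).2
          congr 1
          ext b
          simp only [Finset.mem_filter, Finset.mem_univ, true_and]
          exact ⟨fun h => ⟨(congrFun h i).trans hvi, h⟩, fun h => h.2⟩
        have hstepB : (∑ b ∈ Finset.univ.filter
              (fun b : ChowGS.GV A => f i (b i) = u i),
            (MvPolynomial.X b : MvPolynomial (ChowGS.GV A) ℤ)) =
            ∑ t0 ∈ Finset.univ.filter (fun t0 : A i => f i t0 = u i), Sb t0 := by
          rw [hSb]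
          rw [← Finset.sum_fiberwise_of_maps_to
            (t := Finset.univ.filter (fun t0 : A i => f i t0 = u i))
            (g := fun b : ChowGS.GV A => b i)
            (fun b hb => Finset.mem_filter.mpr
              ⟨Finset.mem_univ _, (Finset.mem_filter.mp hb).2⟩)
            MvPolynomial.X]
          refine Finset.sum_congr rfl fun t0 ht0 => ?_
          have ht0' : f i t0 = u i := (Finset.mem_filter.mp ht0).2
          congr 1
          ext b
          simp only [Finset.mem_filter, Finset.mem_univ, true_and]
          exact ⟨fun h => h.2, fun h => ⟨by rw [h]; exact ht0', h⟩⟩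
        have hmain : (MvPolynomial.aeval
            (fun v : ChowGS.GV B =>
              ∑ u ∈ Finset.univ.filter
                  (fun u : ChowGS.GV A => (fun i => f i (u i)) = v),
                (MvPolynomial.X u : MvPolynomial (ChowGS.GV A) ℤ)))
            ((MvPolynomial.X u : MvPolynomial (ChowGS.GV B) ℤ) * MvPolynomial.X w *
              ∑ v ∈ Finset.univ.filter (fun v : ChowGS.GV B => v i = u i),
                MvPolynomial.X v) =
            ∑ t0 ∈ Finset.univ.filter (fun t0 : A i => f i t0 = u i),
              ∑ c ∈ Finset.univ.filter
                  (fun c : ChowGS.GV A => (fun i' => f i' (c i')) = w),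
                ∑ a ∈ Finset.univ.filter
                    (fun a : ChowGS.GV A => (fun i' => f i' (a i')) = u),
                  (MvPolynomial.X a * MvPolynomial.X c * Sb t0) := by
          rw [map_mul, map_mul, MvPolynomial.aeval_X, MvPolynomial.aeval_X,
            hstepA, hstepB]
          simp only [Finset.sum_mul, Finset.mul_sum, mul_assoc]
        rw [hmain]
        refine Ideal.sum_mem _ fun t0 ht0 => Ideal.sum_mem _ fun c hc =>
          Ideal.sum_mem _ fun a ha => ?_
        have hfa : (fun i' => f i' (a i')) = u := (Finset.mem_filter.mp ha).2
        have hfc : (fun i' => f i' (c i')) = w := (Finset.mem_filter.mp hc).2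
        have hft : f i t0 = u i := (Finset.mem_filter.mp ht0).2
        have hac : a i ≠ c i := fun e =>
          hiuw (by rw [← congrFun hfa i, ← congrFun hfc i, e])
        by_cases h1 : t0 = a i
        · rw [hSb]
          simp only [h1]
          exact ChowGS.r3_mem A H a c i hac
        · by_cases h2 : t0 = c i
          · rw [hSb]
            simp only [h2]
            rw [mul_comm (MvPolynomial.X a) (MvPolynomial.X c)]
            exact ChowGS.r3_mem A H c a i (Ne.symm hac)
          · rw [hSb]
            simp only []
            rw [Finset.mul_sum]
            refine Ideal.sum_mem _ fun b hb => ?_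
            have hbt : b i = t0 := (Finset.mem_filter.mp hb).2
            have e3 : (MvPolynomial.X a * MvPolynomial.X c * MvPolynomial.X b :
                MvPolynomial (ChowGS.GV A) ℤ) =
                (([a, c, b].map MvPolynomial.X).prod) := by
              simp [mul_assoc]
            rw [e3]
            exact ChowGS.r1_mem A H (ChowGS.not_formsSimplex_of_three A H hac
              (fun e => h1 (hbt.symm.trans e.symm))
              (fun e => h2 (hbt.symm.trans e.symm)))
    intro p hp
    exact hle (Ideal.mem_map_of_mem _ hp)
  refine ⟨key, Ideal.Quotient.lift (ChowGS.Irat B G)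
      ((Ideal.Quotient.mk (ChowGS.Irat A H)).comp
        (MvPolynomial.aeval
          (fun v : ChowGS.GV B =>
            ∑ u ∈ Finset.univ.filter
                (fun u : ChowGS.GV A => (fun i => f i (u i)) = v),
              (MvPolynomial.X u : MvPolynomial (ChowGS.GV A) ℤ))).toRingHom)
      (fun a ha => by
        rw [RingHom.comp_apply]
        exact Ideal.Quotient.eq_zero_iff_mem.mpr (key a ha)), fun p => ?_⟩
  simp only [ChowGS.mkChow, Ideal.Quotient.mkₐ_eq_mk, Ideal.Quotient.lift_mk,
    RingHom.comp_apply, AlgHom.coe_toRingHom]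
  rfl
end

section
/- Let d ≥ 1. Identify {0,1}^d with 𝔽_2^d, with pairing ⟨v,w⟩ = Σ_{i=1}^d v_i w_i ∈ 𝔽_2, and set F_w = Σ_{v∈𝔽_2^d} (−1)^{⟨v,w⟩} C_v in Z(□^d) for each w ∈ 𝔽_2^d. Let Ĩ_rat(□^d) be the ideal of ℤ[F_w : w ∈ 𝔽_2^d] generated by: (R*1) F_𝟎 F_w for all w; (R*2) F_{e_i}·(F_w − F_{w+e_i})·(F_z + F_{z+e_i}) for all 1 ≤ i ≤ d and all w, z; (R*3) (F_{w+e_i+e_j} − F_w)(F_{z+e_i+e_j} − F_z) − (F_{w+e_i} − F_{w+e_j})(F_{z+e_i} − F_{z+e_j}) for all 1 ≤ i, j ≤ d and all w, z, where e_i denotes the i-th standard basis vector. Then, after inverting 2, the relations (R*1), (R*2), (R*3) generate the ideal I_rat(□^d) in ℤ[1/2][C_v : v ∈ 𝔽_2^d] = ℤ[1/2][F_w : w ∈ 𝔽_2^d]; in particular, the ring ℤ[F_w]/Ĩ_rat(□^d) localized at 2 is equal to Chow(□^d) localized at 2. -/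
open MvPolynomial

namespace ChowCube

/-- The vertices of the hypercube `□^ι = {0,1}^ι`. -/
abbrev Cube (ι : Type) : Type := ι → Fin 2

variable (ι : Type) [Fintype ι] [DecidableEq ι]

/-- The ideal `I_rat(□^ι)` of elements rationally equivalent to zero, generated by
(R1) products over lists of points which are not pairwise comparable,
(R2) `C_u · (Σ_v C_v)`, and (R3) `C_u C_w · (Σ_{v : v_i = u_i} C_v)` for `u_i ≠ w_i`. -/
noncomputable def Irat : Ideal (MvPolynomial (Cube ι) ℤ) :=
  Ideal.span
    ({ p | ∃ l : List (Cube ι),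
        ¬ (l.Pairwise fun u v => u ≤ v ∨ v ≤ u) ∧ p = (l.map X).prod } ∪
     { p | ∃ u : Cube ι, p = X u * ∑ v : Cube ι, X v } ∪
     { p | ∃ u w : Cube ι, ∃ i : ι, u i ≠ w i ∧
         p = X u * X w * ∑ v ∈ Finset.univ.filter (fun v : Cube ι => v i = u i), X v })

/-- The Chow ring of the hypercube, `Chow(□^ι) = Z(□^ι)/I_rat`. -/
abbrev Chow : Type := MvPolynomial (Cube ι) ℤ ⧸ Irat ι

noncomputable def mk : MvPolynomial (Cube ι) ℤ →ₐ[ℤ] Chow ι :=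
  Ideal.Quotient.mkₐ ℤ (Irat ι)

/-- The degree `n` graded piece `Chow^n(□^ι)`. -/
noncomputable def piece (n : ℕ) : Submodule ℤ (Chow ι) :=
  Submodule.map (mk ι).toLinearMap (homogeneousSubmodule (Cube ι) ℤ n)

/-- The number of coordinates equal to `1`. -/
def wt (u : Cube ι) : ℕ := (Finset.univ.filter fun i => u i = 1).card

/-- The `j`-th vertex of the standard maximal chain in `{0,1}^ι`: the indicator
function of the set of the `j` smallest indices. -/
def chainVtx [LinearOrder ι] (j : ℕ) : Cube ι :=
  fun i => if (Finset.univ.filter fun i' => i' < i).card < j then 1 else 0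

/-- The monomial `C_{u_0}⋯C_{u_card ι}` of the standard maximal chain;
its class generates the top graded piece, and the degree map `deg` is the isomorphism
`Chow^{card ι + 1}(□^ι) ≅ ℤ` sending this class to `1`. -/
noncomputable def genMono [LinearOrder ι] : MvPolynomial (Cube ι) ℤ :=
  ∏ j ∈ Finset.range (Fintype.card ι + 1), X (chainVtx ι j)

end ChowCube

namespace ChowCube

section Fourier

variable (ι : Type) [Fintype ι] [DecidableEq ι]

/-- The `𝔽_2`-pairing `⟨v,w⟩ = Σ_i v_i w_i`, as a natural number (only its parity
matters). -/
def ip (v w : Cube ι) : ℕ := ∑ i, (v i : ℕ) * (w i : ℕ)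

/-- The Fourier dual generators `F_w = Σ_v (−1)^{⟨v,w⟩} C_v`. -/
noncomputable def F (w : Cube ι) : MvPolynomial (Cube ι) ℤ :=
  ∑ v : Cube ι, MvPolynomial.C ((-1 : ℤ) ^ ip ι v w) * MvPolynomial.X v

/-- The standard basis vector `e_i` of `𝔽_2^ι`. -/
def unitVec (i : ι) : Cube ι := fun j => if j = i then 1 else 0

/-- The ideal `Ĩ_rat(□^ι)` generated by the Fourier relations (R*1), (R*2), (R*3). -/
noncomputable def IratF : Ideal (MvPolynomial (Cube ι) ℤ) :=
  Ideal.span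
    ({ p | ∃ w : Cube ι, p = F ι 0 * F ι w } ∪
     { p | ∃ (i : ι) (w z : Cube ι),
        p = F ι (unitVec ι i) * (F ι w - F ι (w + unitVec ι i)) *
              (F ι z + F ι (z + unitVec ι i)) } ∪
     { p | ∃ (i j : ι) (w z : Cube ι),
        p = (F ι (w + unitVec ι i + unitVec ι j) - F ι w) *
              (F ι (z + unitVec ι i + unitVec ι j) - F ι z)
          - (F ι (w + unitVec ι i) - F ι (w + unitVec ι j)) *
              (F ι (z + unitVec ι i) - F ι (z + unitVec ι j)) })

/-- The coefficient extension `ℤ[C_v] → ℤ[1/2][C_v]` inverting `2`. -/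
noncomputable def toHalf :
    MvPolynomial (Cube ι) ℤ →+* MvPolynomial (Cube ι) (Localization.Away (2 : ℤ)) :=
  MvPolynomial.map (algebraMap ℤ (Localization.Away (2 : ℤ)))

end Fourier

end ChowCube
namespace ChowCube
set_option linter.unusedSectionVars false

section Proof
variable {ι : Type} [Fintype ι] [DecidableEq ι]

def sgn (v w : Cube ι) : ℤ := (-1) ^ ip ι v w

lemma F_eq (w : Cube ι) : F ι w = ∑ v : Cube ι, C (sgn v w) * X v := rfl

lemma sgn_eq (v w : Cube ι) : sgn v w = ∏ i, (-1 : ℤ) ^ ((v i : ℕ) * (w i : ℕ)) := by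
  rw [sgn, ip, Finset.prod_pow_eq_pow_sum]

lemma fin2_pow_add (a b c : Fin 2) :
    (-1:ℤ) ^ ((a:ℕ) * ((b + c : Fin 2):ℕ)) = (-1:ℤ)^((a:ℕ)*(b:ℕ)) * (-1:ℤ)^((a:ℕ)*(c:ℕ)) := by
  fin_cases a <;> fin_cases b <;> fin_cases c <;> decide

lemma sgn_add_right (v w z : Cube ι) : sgn v (w + z) = sgn v w * sgn v z := by
  rw [sgn_eq, sgn_eq, sgn_eq, ← Finset.prod_mul_distrib]
  refine Finset.prod_congr rfl fun i _ => ?_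
  have : (w + z) i = w i + z i := rfl
  rw [this, fin2_pow_add]

lemma sgn_comm (v w : Cube ι) : sgn v w = sgn w v := by
  unfold sgn ip
  congr 1
  exact Finset.sum_congr rfl fun i _ => mul_comm _ _

lemma sgn_mul_left (u v w : Cube ι) : sgn u w * sgn v w = sgn (u + v) w := by
  rw [sgn_comm u w, sgn_comm v w, sgn_comm (u+v) w, sgn_add_right]

lemma sgn_zero_right (v : Cube ι) : sgn v 0 = 1 := by
  have : ip ι v 0 = 0 := by
    unfold ip; simp
  rw [sgn, this, pow_zero]

lemma sgn_zero_left (w : Cube ι) : sgn (0 : Cube ι) w = 1 := by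
  rw [sgn_comm, sgn_zero_right]

lemma ip_unitVec (v : Cube ι) (i : ι) : ip ι v (unitVec ι i) = (v i : ℕ) := by
  unfold ip unitVec
  rw [Finset.sum_eq_single i]
  · simp
  · intro k _ hk; simp [hk]
  · intro h; exact absurd (Finset.mem_univ i) h

lemma sgn_unitVec (v : Cube ι) (i : ι) : sgn v (unitVec ι i) = (-1:ℤ) ^ ((v i : ℕ)) := by
  rw [sgn, ip_unitVec]

lemma cube_add_self (t : Cube ι) : t + t = 0 := by
  have h : ∀ a : Fin 2, a + a = 0 := by decide
  funext i; exact h (t i)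

lemma cube_add_eq_zero_iff (u v : Cube ι) : u + v = 0 ↔ v = u := by
  constructor
  · intro h
    calc v = u + v + v := by rw [h, zero_add]
    _ = u := by rw [add_assoc, cube_add_self, add_zero]
  · intro h; rw [h]; exact cube_add_self u

lemma sum_sgn (t : Cube ι) :
    ∑ w : Cube ι, sgn t w = if t = 0 then 2 ^ Fintype.card ι else 0 := by
  by_cases h : t = 0
  · subst h
    rw [if_pos rfl, Finset.sum_congr rfl fun w _ => sgn_zero_left w]
    simp [Finset.card_univ, Fintype.card_fun]
  · rw [if_neg h]
    obtain ⟨i, hi⟩ : ∃ i, t i ≠ 0 := by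
      by_contra hc; push_neg at hc; exact h (funext hc)
    have hti : t i = 1 := by
      have : ∀ a : Fin 2, a ≠ 0 → a = 1 := by decide
      exact this _ hi
    have key : ∑ w : Cube ι, sgn t w = ∑ w : Cube ι, sgn t (w + unitVec ι i) :=
      (Fintype.sum_equiv (Equiv.addRight (unitVec ι i))
        (fun w => sgn t (w + unitVec ι i)) (sgn t) (fun w => rfl)).symm
    have key2 : ∀ w : Cube ι, sgn t (w + unitVec ι i) = - sgn t w := by
      intro w
      rw [sgn_add_right, sgn_unitVec, hti]
      simp
    have h2 : ∑ w : Cube ι, sgn t w = - ∑ w : Cube ι, sgn t w := by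
      conv_lhs => rw [key]
      rw [← Finset.sum_neg_distrib]
      exact Finset.sum_congr rfl fun w _ => key2 w
    linarith

lemma sum_sgn_mul_F (u t : Cube ι) :
    ∑ w : Cube ι, C (sgn u w) * F ι (w + t)
      = C (sgn u t * 2 ^ Fintype.card ι) * X u := by
  have h1 : ∀ w : Cube ι, C (sgn u w) * F ι (w + t)
      = ∑ v : Cube ι, C (sgn (u + v) w * sgn v t) * X v := by
    intro w
    rw [F_eq, Finset.mul_sum]
    refine Finset.sum_congr rfl fun v _ => ?_
    rw [sgn_add_right, ← sgn_mul_left]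
    simp only [map_mul]
    ring
  calc ∑ w : Cube ι, C (sgn u w) * F ι (w + t)
      = ∑ w : Cube ι, ∑ v : Cube ι, C (sgn (u + v) w * sgn v t) * X v :=
        Finset.sum_congr rfl fun w _ => h1 w
    _ = ∑ v : Cube ι, ∑ w : Cube ι, C (sgn (u + v) w * sgn v t) * X v := Finset.sum_comm
    _ = ∑ v : Cube ι, C ((∑ w : Cube ι, sgn (u + v) w) * sgn v t) * X v := by
        refine Finset.sum_congr rfl fun v _ => ?_
        conv_rhs => rw [Finset.sum_mul, map_sum, Finset.sum_mul]
    _ = ∑ v : Cube ι, (if v = u then C (sgn u t * 2 ^ Fintype.card ι) * X v else 0) := by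
        refine Finset.sum_congr rfl fun v _ => ?_
        rw [sum_sgn]
        by_cases h : v = u
        · subst h
          rw [if_pos (cube_add_self v), if_pos rfl, mul_comm ((2:ℤ) ^ Fintype.card ι)]
        · rw [if_neg (fun hc => h ((cube_add_eq_zero_iff u v).mp hc)), if_neg h]
          simp
    _ = C (sgn u t * 2 ^ Fintype.card ι) * X u := by
        rw [Finset.sum_ite_eq' Finset.univ u (fun v => C (sgn u t * 2 ^ Fintype.card ι) * X v)]
        simp

lemma sum_sgn_mul_F_zero (u : Cube ι) :
    ∑ w : Cube ι, C (sgn u w) * F ι w = C ((2:ℤ) ^ Fintype.card ι) * X u := by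
  have h := sum_sgn_mul_F u 0
  simpa [sgn_zero_right] using h

lemma F_add_unit (w : Cube ι) (i : ι) (c : Fin 2) :
    F ι w + C ((-1:ℤ)^(c:ℕ)) * F ι (w + unitVec ι i)
      = C 2 * ∑ v ∈ Finset.univ.filter (fun v : Cube ι => v i = c), C (sgn v w) * X v := by
  have fin2_one_add : ∀ a b : Fin 2, (1:ℤ) + (-1:ℤ)^(a:ℕ) * (-1:ℤ)^(b:ℕ) = if b = a then 2 else 0 := by
    decide
  rw [Finset.mul_sum, Finset.sum_filter, F_eq, F_eq, Finset.mul_sum, ← Finset.sum_add_distrib]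
  refine Finset.sum_congr rfl fun v _ => ?_
  rw [sgn_add_right, sgn_unitVec]
  have step : C (sgn v w) * X v + C ((-1:ℤ)^(c:ℕ)) * (C (sgn v w * (-1:ℤ)^((v i : ℕ))) * X v)
      = C ((1 + (-1:ℤ)^(c:ℕ) * (-1:ℤ)^((v i : ℕ))) * sgn v w) * X v := by
    simp only [map_add, map_mul, map_one]
    ring
  rw [step, fin2_one_add c (v i)]
  by_cases h : v i = c
  · rw [if_pos h, if_pos h, map_mul, mul_assoc]
  · rw [if_neg h, if_neg h]
    simp

lemma F_zero : F ι (0 : Cube ι) = ∑ v : Cube ι, X v := by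
  rw [F_eq]
  refine Finset.sum_congr rfl fun v _ => ?_
  rw [sgn_zero_right, map_one, one_mul]

lemma F_sub2 (w t s : Cube ι) : F ι (w + t) - F ι (w + s)
    = ∑ v : Cube ι, C (sgn v w * (sgn v t - sgn v s)) * X v := by
  rw [F_eq, F_eq, ← Finset.sum_sub_distrib]
  refine Finset.sum_congr rfl fun v _ => ?_
  rw [sgn_add_right, sgn_add_right]
  simp only [map_mul, map_sub]
  ring

lemma F_sub_unit (w : Cube ι) (i : ι) :
    F ι w - F ι (w + unitVec ι i)
      = C 2 * ∑ v ∈ Finset.univ.filter (fun v : Cube ι => v i = 1), C (sgn v w) * X v := by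
  have h := F_add_unit w i 1
  simp only [Fin.val_one, pow_one, map_neg, map_one, neg_one_mul, neg_mul] at h
  rw [← h]
  ring

lemma F_addF_unit (z : Cube ι) (i : ι) :
    F ι z + F ι (z + unitVec ι i)
      = C 2 * ∑ v ∈ Finset.univ.filter (fun v : Cube ι => v i = 0), C (sgn v z) * X v := by
  have h := F_add_unit z i 0
  simpa using h



lemma R1_mem (u x : Cube ι) (h : ¬ (u ≤ x ∨ x ≤ u)) :
    (X u * X x : MvPolynomial (Cube ι) ℤ) ∈ Irat ι := by
  apply Ideal.subset_span
  refine Set.mem_union_left _ (Set.mem_union_left _ ⟨[u, x], ?_, ?_⟩)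
  · intro hp
    rw [List.pairwise_cons] at hp
    exact h (hp.1 x (List.mem_singleton.mpr rfl))
  · simp

lemma R2_mem (u : Cube ι) :
    (X u * ∑ v : Cube ι, X v : MvPolynomial (Cube ι) ℤ) ∈ Irat ι :=
  Ideal.subset_span (Set.mem_union_left _ (Set.mem_union_right _ ⟨u, rfl⟩))

lemma R3_mem (u w : Cube ι) (i : ι) (h : u i ≠ w i) :
    (X u * X w * ∑ v ∈ Finset.univ.filter (fun v : Cube ι => v i = u i), X v :
      MvPolynomial (Cube ι) ℤ) ∈ Irat ι :=
  Ideal.subset_span (Set.mem_union_right _ ⟨u, w, i, h, rfl⟩)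

lemma FR1_mem (w : Cube ι) : (F ι 0 * F ι w) ∈ IratF ι :=
  Ideal.subset_span (Set.mem_union_left _ (Set.mem_union_left _ ⟨w, rfl⟩))

lemma FR2_mem (i : ι) (w z : Cube ι) :
    F ι (unitVec ι i) * (F ι w - F ι (w + unitVec ι i)) * (F ι z + F ι (z + unitVec ι i))
      ∈ IratF ι :=
  Ideal.subset_span (Set.mem_union_left _ (Set.mem_union_right _ ⟨i, w, z, rfl⟩))

lemma FR3_mem (i j : ι) (w z : Cube ι) :
    (F ι (w + unitVec ι i + unitVec ι j) - F ι w) *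
        (F ι (z + unitVec ι i + unitVec ι j) - F ι z)
      - (F ι (w + unitVec ι i) - F ι (w + unitVec ι j)) *
        (F ι (z + unitVec ι i) - F ι (z + unitVec ι j)) ∈ IratF ι :=
  Ideal.subset_span (Set.mem_union_right _ ⟨i, j, w, z, rfl⟩)

lemma incomp {u x : Cube ι} {i j : ι} (h1 : u i ≠ x i) (h2 : u j ≠ x j) (h3 : u i ≠ u j) :
    ¬ (u ≤ x ∨ x ≤ u) := by
  have key : ∀ a b c d : Fin 2, a ≠ c → b ≠ d → a ≠ b → ¬(a ≤ c ∧ b ≤ d) ∧ ¬(c ≤ a ∧ d ≤ b) := by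
    decide
  rintro (h | h)
  · exact ((key _ _ _ _ h1 h2 h3).1) ⟨h i, h j⟩
  · exact ((key _ _ _ _ h1 h2 h3).2) ⟨h i, h j⟩

lemma FA_key (u x : Cube ι) (i : ι) (h : u i ≠ x i) :
    F ι (unitVec ι i) * (X u * X x) ∈ Irat ι := by
  have e8 := F_add_unit (0 : Cube ι) i (x i)
  simp only [zero_add, sgn_zero_right, map_one, one_mul] at e8
  have hsq : (C ((-1:ℤ)^((x i):ℕ)) : MvPolynomial (Cube ι) ℤ) * C ((-1:ℤ)^((x i):ℕ)) = 1 := by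
    rw [← map_mul, ← pow_add, Even.neg_one_pow ⟨(x i : ℕ), rfl⟩, map_one]
  have hFe : F ι (unitVec ι i)
      = C ((-1:ℤ)^((x i):ℕ)) *
        (C 2 * (∑ v ∈ Finset.univ.filter (fun v : Cube ι => v i = x i), X v) - F ι 0) := by
    linear_combination (C ((-1:ℤ)^((x i):ℕ)) : MvPolynomial (Cube ι) ℤ) * e8
      - F ι (unitVec ι i) * hsq
  rw [hFe]
  have expand : C ((-1:ℤ)^((x i):ℕ)) *
        (C 2 * (∑ v ∈ Finset.univ.filter (fun v : Cube ι => v i = x i), X v) - F ι 0) *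
        (X u * X x)
      = C ((-1:ℤ)^((x i):ℕ)) *
        (C 2 * (X x * X u * ∑ v ∈ Finset.univ.filter (fun v : Cube ι => v i = x i), X v)
          - X x * (X u * ∑ v : Cube ι, X v)) := by
    rw [F_zero]
    ring
  rw [expand]
  exact Ideal.mul_mem_left _ _
    (Ideal.sub_mem _ (Ideal.mul_mem_left _ _ (R3_mem x u i h.symm))
      (Ideal.mul_mem_left _ _ (R2_mem u)))

lemma FR1_in_Irat (w : Cube ι) : F ι 0 * F ι w ∈ Irat ι := by
  have h : F ι 0 * F ι w = ∑ v : Cube ι, C (sgn v w) * (X v * ∑ v' : Cube ι, X v') := by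
    rw [mul_comm, F_eq, ← F_zero, Finset.sum_mul]
    exact Finset.sum_congr rfl fun v _ => mul_assoc _ _ _
  rw [h]
  exact Ideal.sum_mem _ fun v _ => Ideal.mul_mem_left _ _ (R2_mem v)

lemma FR2_in_Irat (i : ι) (w z : Cube ι) :
    F ι (unitVec ι i) * (F ι w - F ι (w + unitVec ι i)) * (F ι z + F ι (z + unitVec ι i))
      ∈ Irat ι := by
  rw [F_sub_unit, F_addF_unit]
  have expand : F ι (unitVec ι i) *
        (C 2 * ∑ v ∈ Finset.univ.filter (fun v : Cube ι => v i = 1), C (sgn v w) * X v) *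
        (C 2 * ∑ v ∈ Finset.univ.filter (fun v : Cube ι => v i = 0), C (sgn v z) * X v)
      = C 2 * C 2 *
        ∑ a ∈ Finset.univ.filter (fun v : Cube ι => v i = 1),
          ∑ b ∈ Finset.univ.filter (fun v : Cube ι => v i = 0),
            (C (sgn a w) * C (sgn b z)) * (F ι (unitVec ι i) * (X a * X b)) := by
    calc F ι (unitVec ι i) *
        (C 2 * ∑ v ∈ Finset.univ.filter (fun v : Cube ι => v i = 1), C (sgn v w) * X v) *
        (C 2 * ∑ v ∈ Finset.univ.filter (fun v : Cube ι => v i = 0), C (sgn v z) * X v)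
        = C 2 * C 2 * (F ι (unitVec ι i) *
            ((∑ v ∈ Finset.univ.filter (fun v : Cube ι => v i = 1), C (sgn v w) * X v) *
             (∑ v ∈ Finset.univ.filter (fun v : Cube ι => v i = 0), C (sgn v z) * X v))) := by
          ring
      _ = C 2 * C 2 *
          ∑ a ∈ Finset.univ.filter (fun v : Cube ι => v i = 1),
            ∑ b ∈ Finset.univ.filter (fun v : Cube ι => v i = 0),
              (C (sgn a w) * C (sgn b z)) * (F ι (unitVec ι i) * (X a * X b)) := by
          rw [Finset.sum_mul_sum, Finset.mul_sum]
          congr 1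
          refine Finset.sum_congr rfl fun a _ => ?_
          rw [Finset.mul_sum]
          refine Finset.sum_congr rfl fun b _ => ?_
          ring
  rw [expand]
  refine Ideal.mul_mem_left _ _ (Ideal.sum_mem _ fun a ha => Ideal.sum_mem _ fun b hb => ?_)
  have ha1 : a i = 1 := (Finset.mem_filter.mp ha).2
  have hb0 : b i = 0 := (Finset.mem_filter.mp hb).2
  have hne : a i ≠ b i := by rw [ha1, hb0]; decide
  exact Ideal.mul_mem_left _ _ (FA_key a b i hne)

lemma gamma_mem (u x : Cube ι) (i j : ι) :
    C ((sgn u (unitVec ι i) * sgn u (unitVec ι j) - 1) *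
         (sgn x (unitVec ι i) * sgn x (unitVec ι j) - 1)
       - (sgn u (unitVec ι i) - sgn u (unitVec ι j)) *
         (sgn x (unitVec ι i) - sgn x (unitVec ι j)))
      * (X u * X x) ∈ Irat ι := by
  simp only [sgn_unitVec]
  by_cases h : u i ≠ x i ∧ u j ≠ x j ∧ u i ≠ u j
  · exact Ideal.mul_mem_left _ _ (R1_mem u x (incomp h.1 h.2.1 h.2.2))
  · have hz : ∀ a b c d : Fin 2, ¬(a ≠ c ∧ b ≠ d ∧ a ≠ b) →
        ((-1:ℤ)^(a:ℕ) * (-1:ℤ)^(b:ℕ) - 1) * ((-1:ℤ)^(c:ℕ) * (-1:ℤ)^(d:ℕ) - 1)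
          - ((-1:ℤ)^(a:ℕ) - (-1:ℤ)^(b:ℕ)) * ((-1:ℤ)^(c:ℕ) - (-1:ℤ)^(d:ℕ)) = 0 := by
      decide
    rw [hz (u i) (u j) (x i) (x j) h, map_zero, zero_mul]
    exact Ideal.zero_mem _

lemma FR3_in_Irat (i j : ι) (w z : Cube ι) :
    (F ι (w + unitVec ι i + unitVec ι j) - F ι w) *
        (F ι (z + unitVec ι i + unitVec ι j) - F ι z)
      - (F ι (w + unitVec ι i) - F ι (w + unitVec ι j)) *
        (F ι (z + unitVec ι i) - F ι (z + unitVec ι j)) ∈ Irat ι := by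
  have hG : ∀ y : Cube ι, F ι (y + unitVec ι i + unitVec ι j) - F ι y
      = ∑ v : Cube ι,
          C (sgn v y * (sgn v (unitVec ι i) * sgn v (unitVec ι j) - 1)) * X v := by
    intro y
    have h0 : F ι y = F ι (y + 0) := by rw [add_zero]
    rw [add_assoc, h0, F_sub2]
    refine Finset.sum_congr rfl fun v _ => ?_
    rw [sgn_add_right, sgn_zero_right]
  have hH : ∀ y : Cube ι, F ι (y + unitVec ι i) - F ι (y + unitVec ι j)
      = ∑ v : Cube ι,
          C (sgn v y * (sgn v (unitVec ι i) - sgn v (unitVec ι j))) * X v :=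
    fun y => F_sub2 y _ _
  rw [hG w, hG z, hH w, hH z, Finset.sum_mul_sum, Finset.sum_mul_sum,
    ← Finset.sum_sub_distrib]
  refine Ideal.sum_mem _ fun a _ => ?_
  rw [← Finset.sum_sub_distrib]
  refine Ideal.sum_mem _ fun b _ => ?_
  have hterm : C (sgn a w * (sgn a (unitVec ι i) * sgn a (unitVec ι j) - 1)) * X a *
        (C (sgn b z * (sgn b (unitVec ι i) * sgn b (unitVec ι j) - 1)) * X b)
      - C (sgn a w * (sgn a (unitVec ι i) - sgn a (unitVec ι j))) * X a *
        (C (sgn b z * (sgn b (unitVec ι i) - sgn b (unitVec ι j))) * X b)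
      = (C (sgn a w) * C (sgn b z)) *
        (C ((sgn a (unitVec ι i) * sgn a (unitVec ι j) - 1) *
              (sgn b (unitVec ι i) * sgn b (unitVec ι j) - 1)
            - (sgn a (unitVec ι i) - sgn a (unitVec ι j)) *
              (sgn b (unitVec ι i) - sgn b (unitVec ι j))) * (X a * X b)) := by
    simp only [map_mul, map_sub, map_one]
    ring
  rw [hterm]
  exact Ideal.mul_mem_left _ _ (gamma_mem a b i j)

lemma IratF_le_Irat : IratF ι ≤ Irat ι := by
  rw [IratF, Ideal.span_le]
  rintro p ((h | h) | h)
  · obtain ⟨w, rfl⟩ := h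
    exact FR1_in_Irat w
  · obtain ⟨i, w, z, rfl⟩ := h
    exact FR2_in_Irat i w z
  · obtain ⟨i, j, w, z, rfl⟩ := h
    exact FR3_in_Irat i j w z


lemma sum_sgn_mul_F_sub0 (u s : Cube ι) :
    ∑ w : Cube ι, C (sgn u w) * (F ι w - F ι (w + s))
      = C ((1 - sgn u s) * 2 ^ Fintype.card ι) * X u := by
  simp only [mul_sub, Finset.sum_sub_distrib, sum_sgn_mul_F, sum_sgn_mul_F_zero]
  simp only [map_mul, map_sub, map_one, map_pow, map_ofNat]
  ring

lemma sum_sgn_mul_F_add0 (u s : Cube ι) :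
    ∑ w : Cube ι, C (sgn u w) * (F ι w + F ι (w + s))
      = C ((1 + sgn u s) * 2 ^ Fintype.card ι) * X u := by
  simp only [mul_add, Finset.sum_add_distrib, sum_sgn_mul_F, sum_sgn_mul_F_zero]
  simp only [map_mul, map_add, map_one, map_pow, map_ofNat]
  ring

lemma LB2 (u : Cube ι) :
    C ((2:ℤ) ^ Fintype.card ι) * (X u * F ι 0) ∈ IratF ι := by
  have h : ∑ w : Cube ι, C (sgn u w) * (F ι 0 * F ι w)
      = C ((2:ℤ) ^ Fintype.card ι) * (X u * F ι 0) := by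
    calc ∑ w : Cube ι, C (sgn u w) * (F ι 0 * F ι w)
        = (∑ w : Cube ι, C (sgn u w) * F ι w) * F ι 0 := by
          rw [Finset.sum_mul]
          exact Finset.sum_congr rfl fun w _ => by ring
      _ = C ((2:ℤ) ^ Fintype.card ι) * (X u * F ι 0) := by
          rw [sum_sgn_mul_F_zero]; ring
  rw [← h]
  exact Ideal.sum_mem _ fun w _ => Ideal.mul_mem_left _ _ (FR1_mem w)

lemma LBkey (u x : Cube ι) (i : ι) (hu : u i = 1) (hx : x i = 0) :
    C ((2:ℤ) ^ (2 * Fintype.card ι + 2)) * (F ι (unitVec ι i) * (X u * X x))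
      ∈ IratF ι := by
  have hA : ∑ w : Cube ι, C (sgn u w) * (F ι w - F ι (w + unitVec ι i))
      = C (2 * 2 ^ Fintype.card ι) * X u := by
    rw [sum_sgn_mul_F_sub0, sgn_unitVec, hu]
    norm_num
  have hB : ∑ z : Cube ι, C (sgn x z) * (F ι z + F ι (z + unitVec ι i))
      = C (2 * 2 ^ Fintype.card ι) * X x := by
    rw [sum_sgn_mul_F_add0, sgn_unitVec, hx]
    norm_num
  have key : ∑ w : Cube ι, ∑ z : Cube ι, C (sgn u w * sgn x z) *
        (F ι (unitVec ι i) * (F ι w - F ι (w + unitVec ι i)) * (F ι z + F ι (z + unitVec ι i)))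
      = C ((2:ℤ) ^ (2 * Fintype.card ι + 2)) * (F ι (unitVec ι i) * (X u * X x)) := by
    calc ∑ w : Cube ι, ∑ z : Cube ι, C (sgn u w * sgn x z) *
        (F ι (unitVec ι i) * (F ι w - F ι (w + unitVec ι i)) * (F ι z + F ι (z + unitVec ι i)))
        = ∑ w : Cube ι, ∑ z : Cube ι, F ι (unitVec ι i) *
            ((C (sgn u w) * (F ι w - F ι (w + unitVec ι i))) *
             (C (sgn x z) * (F ι z + F ι (z + unitVec ι i)))) := by
          refine Finset.sum_congr rfl fun w _ => Finset.sum_congr rfl fun z _ => ?_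
          simp only [map_mul]
          ring
      _ = F ι (unitVec ι i) *
            ((∑ w : Cube ι, C (sgn u w) * (F ι w - F ι (w + unitVec ι i))) *
             (∑ z : Cube ι, C (sgn x z) * (F ι z + F ι (z + unitVec ι i)))) := by
          rw [Finset.sum_mul_sum, Finset.mul_sum]
          refine Finset.sum_congr rfl fun w _ => ?_
          rw [Finset.mul_sum]
      _ = C ((2:ℤ) ^ (2 * Fintype.card ι + 2)) * (F ι (unitVec ι i) * (X u * X x)) := by
          rw [hA, hB]
          have hpow : (2:ℤ) ^ (2 * Fintype.card ι + 2)
              = (2 * 2 ^ Fintype.card ι) * (2 * 2 ^ Fintype.card ι) := by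
            rw [show 2 * Fintype.card ι + 2 = (Fintype.card ι + 1) + (Fintype.card ι + 1) from by
              omega, pow_add]
            ring
          rw [hpow]
          simp only [map_mul, map_pow, map_ofNat]
          ring
  rw [← key]
  exact Ideal.sum_mem _ fun w _ => Ideal.sum_mem _ fun z _ =>
    Ideal.mul_mem_left _ _ (FR2_mem i w z)

lemma LB3 (u x : Cube ι) (i : ι) (h : u i ≠ x i) :
    C ((2:ℤ) ^ (2 * Fintype.card ι + 3)) *
      (X u * X x * ∑ v ∈ Finset.univ.filter (fun v : Cube ι => v i = u i), X v)
      ∈ IratF ι := by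
  have e8 := F_add_unit (0 : Cube ι) i (u i)
  simp only [zero_add, sgn_zero_right, map_one, one_mul] at e8
  -- e8 : F 0 + C ((-1)^(u i : ℕ)) * F (unitVec i) = C 2 * ∑ filter, X v
  have split : C ((2:ℤ) ^ (2 * Fintype.card ι + 3)) *
      (X u * X x * ∑ v ∈ Finset.univ.filter (fun v : Cube ι => v i = u i), X v)
      = C ((2:ℤ) ^ (2 * Fintype.card ι + 2)) * (X u * X x) *
        (C 2 * ∑ v ∈ Finset.univ.filter (fun v : Cube ι => v i = u i), X v) := by
    rw [pow_succ, map_mul]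
    ring
  rw [split, ← e8, mul_add]
  apply Ideal.add_mem
  · have h1 : C ((2:ℤ) ^ (2 * Fintype.card ι + 2)) * (X u * X x) * F ι 0
        = (C ((2:ℤ) ^ (Fintype.card ι + 2)) * X x) *
          (C ((2:ℤ) ^ Fintype.card ι) * (X u * F ι 0)) := by
      rw [show (2:ℤ) ^ (2 * Fintype.card ι + 2)
          = 2 ^ (Fintype.card ι + 2) * 2 ^ Fintype.card ι from by
        rw [← pow_add]; congr 1; omega, map_mul]
      ring
    rw [h1]
    exact Ideal.mul_mem_left _ _ (LB2 u)
  · have horient : (u i = 1 ∧ x i = 0) ∨ (u i = 0 ∧ x i = 1) := by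
      have : ∀ a b : Fin 2, a ≠ b → (a = 1 ∧ b = 0) ∨ (a = 0 ∧ b = 1) := by decide
      exact this _ _ h
    rcases horient with ⟨h1, h2⟩ | ⟨h1, h2⟩
    · have e : C ((2:ℤ) ^ (2 * Fintype.card ι + 2)) * (X u * X x) *
          (C ((-1:ℤ)^((u i):ℕ)) * F ι (unitVec ι i))
          = C ((-1:ℤ)^((u i):ℕ)) *
            (C ((2:ℤ) ^ (2 * Fintype.card ι + 2)) * (F ι (unitVec ι i) * (X u * X x))) := by
        ring
      rw [e]
      exact Ideal.mul_mem_left _ _ (LBkey u x i h1 h2)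
    · have e : C ((2:ℤ) ^ (2 * Fintype.card ι + 2)) * (X u * X x) *
          (C ((-1:ℤ)^((u i):ℕ)) * F ι (unitVec ι i))
          = C ((-1:ℤ)^((u i):ℕ)) *
            (C ((2:ℤ) ^ (2 * Fintype.card ι + 2)) * (F ι (unitVec ι i) * (X x * X u))) := by
        ring
      rw [e]
      exact Ideal.mul_mem_left _ _ (LBkey x u i h2 h1)

lemma LB1 (u x : Cube ι) (h : ¬ (u ≤ x ∨ x ≤ u)) :
    C ((2:ℤ) ^ (2 * Fintype.card ι + 3)) * (X u * X x) ∈ IratF ι := by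
  rw [not_or] at h
  obtain ⟨hux, hxu⟩ := h
  obtain ⟨i, hi⟩ : ∃ i, ¬ u i ≤ x i := by
    by_contra hc; push_neg at hc; exact hux fun k => hc k
  obtain ⟨j, hj⟩ : ∃ j, ¬ x j ≤ u j := by
    by_contra hc; push_neg at hc; exact hxu fun k => hc k
  have fin2le : ∀ a b : Fin 2, ¬ a ≤ b → a = 1 ∧ b = 0 := by decide
  obtain ⟨hui, hxi⟩ := fin2le _ _ hi
  obtain ⟨hxj, huj⟩ := fin2le _ _ hj
  have hG : ∀ y : Cube ι, ∑ w : Cube ι, C (sgn y w) *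
        (F ι (w + unitVec ι i + unitVec ι j) - F ι w)
      = C ((sgn y (unitVec ι i) * sgn y (unitVec ι j) - 1) * 2 ^ Fintype.card ι) * X y := by
    intro y
    simp only [mul_sub, Finset.sum_sub_distrib, add_assoc, sum_sgn_mul_F, sum_sgn_mul_F_zero,
      sgn_add_right]
    simp only [map_mul, map_sub, map_one, map_pow, map_ofNat]
    ring
  have hH : ∀ y : Cube ι, ∑ w : Cube ι, C (sgn y w) *
        (F ι (w + unitVec ι i) - F ι (w + unitVec ι j))
      = C ((sgn y (unitVec ι i) - sgn y (unitVec ι j)) * 2 ^ Fintype.card ι) * X y := by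
    intro y
    simp only [mul_sub, Finset.sum_sub_distrib, sum_sgn_mul_F]
    simp only [map_mul, map_sub, map_one, map_pow, map_ofNat]
    ring
  have key : ∑ w : Cube ι, ∑ z : Cube ι, C (sgn u w * sgn x z) *
        ((F ι (w + unitVec ι i + unitVec ι j) - F ι w) *
           (F ι (z + unitVec ι i + unitVec ι j) - F ι z)
         - (F ι (w + unitVec ι i) - F ι (w + unitVec ι j)) *
           (F ι (z + unitVec ι i) - F ι (z + unitVec ι j)))
      = C ((2:ℤ) ^ (2 * Fintype.card ι + 3)) * (X u * X x) := by
    calc ∑ w : Cube ι, ∑ z : Cube ι, C (sgn u w * sgn x z) *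
        ((F ι (w + unitVec ι i + unitVec ι j) - F ι w) *
           (F ι (z + unitVec ι i + unitVec ι j) - F ι z)
         - (F ι (w + unitVec ι i) - F ι (w + unitVec ι j)) *
           (F ι (z + unitVec ι i) - F ι (z + unitVec ι j)))
        = ∑ w : Cube ι, ∑ z : Cube ι,
            ((C (sgn u w) * (F ι (w + unitVec ι i + unitVec ι j) - F ι w)) *
             (C (sgn x z) * (F ι (z + unitVec ι i + unitVec ι j) - F ι z))
           - (C (sgn u w) * (F ι (w + unitVec ι i) - F ι (w + unitVec ι j))) *
             (C (sgn x z) * (F ι (z + unitVec ι i) - F ι (z + unitVec ι j)))) := by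
          refine Finset.sum_congr rfl fun w _ => Finset.sum_congr rfl fun z _ => ?_
          simp only [map_mul]
          ring
      _ = (∑ w : Cube ι, C (sgn u w) * (F ι (w + unitVec ι i + unitVec ι j) - F ι w)) *
          (∑ z : Cube ι, C (sgn x z) * (F ι (z + unitVec ι i + unitVec ι j) - F ι z))
        - (∑ w : Cube ι, C (sgn u w) * (F ι (w + unitVec ι i) - F ι (w + unitVec ι j))) *
          (∑ z : Cube ι, C (sgn x z) * (F ι (z + unitVec ι i) - F ι (z + unitVec ι j))) := by
          simp only [Finset.sum_sub_distrib, Finset.sum_mul_sum]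
      _ = C ((2:ℤ) ^ (2 * Fintype.card ι + 3)) * (X u * X x) := by
          rw [hG u, hG x, hH u, hH x, sgn_unitVec, sgn_unitVec, sgn_unitVec, sgn_unitVec,
            hui, hxi, huj, hxj]
          have hpow : (2:ℤ) ^ (2 * Fintype.card ι + 3)
              = 8 * (2 ^ Fintype.card ι * 2 ^ Fintype.card ι) := by
            rw [show 2 * Fintype.card ι + 3 = Fintype.card ι + Fintype.card ι + 3 from by omega,
              pow_add, pow_add]
            ring
          rw [hpow]
          simp only [map_mul, map_sub, map_one, map_pow, map_ofNat, Fin.val_one, Fin.val_zero,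
            pow_one, pow_zero, map_neg]
          ring
  rw [← key]
  exact Ideal.sum_mem _ fun w _ => Ideal.sum_mem _ fun z _ =>
    Ideal.mul_mem_left _ _ (FR3_mem i j w z)

lemma exists_bad_dvd : ∀ (l : List (Cube ι)),
    ¬ l.Pairwise (fun u v => u ≤ v ∨ v ≤ u) →
    ∃ u x, ¬ (u ≤ x ∨ x ≤ u) ∧
      (X u * X x : MvPolynomial (Cube ι) ℤ) ∣ (l.map X).prod := by
  intro l
  induction l with
  | nil => intro h; exact absurd List.Pairwise.nil h
  | cons a t ih =>
    intro h
    rw [List.pairwise_cons] at h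
    by_cases hall : ∀ b ∈ t, (a ≤ b ∨ b ≤ a)
    · have ht : ¬ t.Pairwise (fun u v => u ≤ v ∨ v ≤ u) := fun hp => h ⟨hall, hp⟩
      obtain ⟨u, x, h1, h2⟩ := ih ht
      refine ⟨u, x, h1, h2.trans ?_⟩
      rw [List.map_cons, List.prod_cons]
      exact dvd_mul_left _ _
    · push_neg at hall
      obtain ⟨b, hb, hnb⟩ := hall
      refine ⟨a, b, not_or.mpr hnb, ?_⟩
      rw [List.map_cons, List.prod_cons]
      exact mul_dvd_mul_left _ (List.dvd_prod (List.mem_map_of_mem (f := X) hb))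


lemma mem_map_of_scaled {p : MvPolynomial (Cube ι) ℤ} {J : Ideal (MvPolynomial (Cube ι) ℤ)}
    (k : ℕ) (h : C ((2:ℤ) ^ k) * p ∈ J) :
    toHalf ι p ∈ Ideal.map (toHalf ι) J := by
  have hm := Ideal.mem_map_of_mem (toHalf ι) h
  rw [map_mul] at hm
  have hC : toHalf ι (C ((2:ℤ) ^ k))
      = C ((algebraMap ℤ (Localization.Away (2 : ℤ))) ((2:ℤ) ^ k)) := by
    unfold toHalf
    rw [MvPolynomial.map_C]
  rw [hC] at hm
  have hu : IsUnit (C ((algebraMap ℤ (Localization.Away (2 : ℤ))) ((2:ℤ) ^ k)) :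
      MvPolynomial (Cube ι) (Localization.Away (2 : ℤ))) := by
    apply IsUnit.map (C : Localization.Away (2:ℤ) →+* MvPolynomial (Cube ι) (Localization.Away (2:ℤ)))
    rw [map_pow]
    exact (IsLocalization.Away.algebraMap_isUnit (2:ℤ)).pow k
  exact (Ideal.unit_mul_mem_iff_mem _ hu).mp hm

theorem fourier_relations_generate_aux (ι : Type) [Fintype ι] [DecidableEq ι] :
    Ideal.map (toHalf ι) (IratF ι) = Ideal.map (toHalf ι) (Irat ι) := by
  apply le_antisymm
  · exact Ideal.map_mono IratF_le_Irat
  · rw [Irat, Ideal.map_span, Ideal.span_le]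
    rintro q ⟨p, hp, rfl⟩
    rcases hp with (h | h) | h
    · obtain ⟨l, hl, rfl⟩ := h
      obtain ⟨u, x, hux, q, hq⟩ := exists_bad_dvd l hl
      rw [hq, map_mul]
      exact Ideal.mul_mem_right _ _
        (mem_map_of_scaled (2 * Fintype.card ι + 3) (LB1 u x hux))
    · obtain ⟨u, rfl⟩ := h
      rw [show (X u * ∑ v : Cube ι, X v : MvPolynomial (Cube ι) ℤ) = X u * F ι 0 from by
        rw [F_zero]]
      exact mem_map_of_scaled (Fintype.card ι) (LB2 u)
    · obtain ⟨u, w, i, hne, rfl⟩ := h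
      exact mem_map_of_scaled (2 * Fintype.card ι + 3) (LB3 u w i hne)


end Proof

end ChowCube

/-- **Theorem 1.5**: after inverting `2`, the Fourier relations (R*1), (R*2), (R*3)
generate the ideal `I_rat(□^d)` in `ℤ[1/2][C_v] = ℤ[1/2][F_w]`; in particular
`ℤ[F_w]/Ĩ_rat` and `Chow(□^d)` become equal after localization at `2`. -/
theorem ChowCube.fourier_relations_generate
    (d : ℕ) (hd : 1 ≤ d) :
    Ideal.map (ChowCube.toHalf (Fin d)) (ChowCube.IratF (Fin d)) =
      Ideal.map (ChowCube.toHalf (Fin d)) (ChowCube.Irat (Fin d)) := by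
  exact ChowCube.fourier_relations_generate_aux (Fin d)
end
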